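/- arXiv:0810.4703 — 4 statements merged into one kernel-verified Lean document; each statement's English description precedes it below -/
import Mathlib

section
/- Let w1, w2 be complex numbers and set w3 = (1+w1)(1+w2) - 1. Then min{|w3|, |w3|/|1+w3|} ≤ min{|w1|, |w1|/|1+w1|} + min{|w2|, |w2|/|1+w2|}. (When 1+w3 = 0, interpret |w3|/|1+w3| as +∞, so the left side equals |w3|.) -/
/-- The effective edge weight `min {|w|, |w|/|1+w|}`, interpreted as `|w|`
when `1 + w = 0` (i.e. `|w|/|1+w| = +∞`). -/
noncomputable def effWeight (w : ℂ) : ℝ :=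
  if 1 + w = 0 then ‖w‖
  else min ‖w‖ (‖w‖ / ‖1 + w‖)

/-!
The effective weight is `‖w‖ / max 1 ‖1 + w‖`, including at `1 + w = 0`. With `a = 1 + w₁`,
`b = 1 + w₂` we have `w₃ = w₁ b + w₂`, so `‖w₃‖ ≤ ‖w₁‖ ‖b‖ + ‖w₂‖`; dividing by `max 1 ‖ab‖`
bounds each term by the corresponding effective weight as soon as `max 1 ‖b‖ ≤ max 1 ‖ab‖`.
Either this or its mirror image `max 1 ‖a‖ ≤ max 1 ‖ab‖` holds, according as `‖b‖ ≤ 1` or not.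
-/

lemma effWeight_eq_norm_div_max (w : ℂ) : effWeight w = ‖w‖ / max 1 ‖1 + w‖ := by
  unfold effWeight
  split_ifs with h
  · simp [h]
  · rcases le_total ‖1 + w‖ 1 with hle | hge
    · rw [max_eq_left hle, div_one,
        min_eq_left (le_div_self (norm_nonneg _) (norm_pos_iff.2 h) hle)]
    · rw [max_eq_right hge, min_eq_right (div_le_self (norm_nonneg _) hge)]

lemma max_one_le_max_one_mul_or {x y : ℝ} (hx : 0 ≤ x) :
    max 1 x ≤ max 1 (x * y) ∨ max 1 y ≤ max 1 (x * y) := by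
  rcases le_total 1 y with hy | hy
  · exact .inl (max_le_max le_rfl (le_mul_of_one_le_right hx hy))
  · exact .inr (by rw [max_eq_left hy]; exact le_max_left _ _)

lemma norm_mul_sub_one_le (w1 w2 : ℂ) :
    ‖(1 + w1) * (1 + w2) - 1‖ ≤ ‖w1‖ * ‖1 + w2‖ + ‖w2‖ :=
  calc ‖(1 + w1) * (1 + w2) - 1‖ = ‖w1 * (1 + w2) + w2‖ := by ring_nf
    _ ≤ ‖w1‖ * ‖1 + w2‖ + ‖w2‖ := (norm_add_le _ _).trans_eq (by rw [norm_mul])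

lemma effWeight_mul_sub_one_le_of_max_le (w1 w2 : ℂ)
    (h : max 1 ‖1 + w2‖ ≤ max 1 (‖1 + w1‖ * ‖1 + w2‖)) :
    effWeight ((1 + w1) * (1 + w2) - 1) ≤ effWeight w1 + effWeight w2 := by
  simp only [effWeight_eq_norm_div_max, add_sub_cancel, norm_mul]
  set a := ‖1 + w1‖
  set b := ‖1 + w2‖
  have hM : b * max 1 a ≤ max 1 (a * b) := by
    rw [mul_max_of_nonneg _ _ (norm_nonneg _), mul_one, mul_comm b a]
    exact max_le ((le_max_right 1 b).trans h) (le_max_right _ _)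
  have hMpos : 0 < max 1 (a * b) := lt_max_of_lt_left one_pos
  calc ‖(1 + w1) * (1 + w2) - 1‖ / max 1 (a * b)
      ≤ ‖w1‖ * b / max 1 (a * b) + ‖w2‖ / max 1 (a * b) := by
        rw [← add_div]; gcongr; exact norm_mul_sub_one_le w1 w2
    _ ≤ ‖w1‖ / max 1 a + ‖w2‖ / max 1 b := by
        gcongr ?_ + ?_
        · rw [div_le_div_iff₀ hMpos (lt_max_of_lt_left one_pos), mul_assoc]
          gcongr
        · exact div_le_div_of_nonneg_left (norm_nonneg _) (lt_max_of_lt_left one_pos) h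

theorem stmt_1 (w1 w2 : ℂ) (w3 : ℂ) (h : w3 = (1 + w1) * (1 + w2) - 1) :
    effWeight w3 ≤ effWeight w1 + effWeight w2 := by
  subst h
  rcases max_one_le_max_one_mul_or (norm_nonneg (1 + w1)) (y := ‖1 + w2‖) with h1 | h2
  · have := effWeight_mul_sub_one_le_of_max_le w2 w1 (by rwa [mul_comm])
    rwa [mul_comm, add_comm (effWeight w2)] at this
  · exact effWeight_mul_sub_one_le_of_max_le w1 w2 h2
end

section
/- For all real x > 0, 1/log(1+x) ≤ 1/x + 1/2. -/
theorem stmt_3 (x : ℝ) (hx : 0 < x) :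
    1 / Real.log (1 + x) ≤ 1 / x + 1 / 2 := by
  calc 1 / Real.log (1 + x) ≤ 1 / (2 * x / (x + 2)) :=
        one_div_le_one_div_of_le (by positivity) (Real.le_log_one_add_of_nonneg hx.le)
    _ = 1 / x + 1 / 2 := by field_simp; ring
end

section
/- Let H = (V,E) be a finite graph with complex edge weights w_e satisfying |1 + w_e| ≤ 1 for all e. Then |C_H(w)| ≤ T_H(|w|), where C_H(w) = ∑_{A⊆E : (V,A) connected} ∏_{e∈A} w_e is the generating polynomial of connected spanning subgraphs and T_H(|w|) = ∑_{T⊆E : (V,T) spanning tree} ∏_{e∈T} |w_e| is the spanning-tree generating polynomial with weights |w_e|. -/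
/-- The spanning subgraph `(V, A)` of a multigraph with edge-endpoint map
`ends : E → Sym2 V` is connected. -/
def SpanningConnected {V E : Type*} (ends : E → Sym2 V) (A : Finset E) : Prop :=
  (SimpleGraph.fromEdgeSet (ends '' (A : Set E))).Connected

/-- `(V, T)` is a spanning tree: connected with `|T| = |V| - 1`. -/
def SpanningTree {V E : Type*} [Fintype V] (ends : E → Sym2 V)
    (T : Finset E) : Prop :=
  SpanningConnected ends T ∧ T.card + 1 = Fintype.card V

/-!
Fix a root `r` and a linear order on the edges. For a connected spanning subgraph `A`, let every
vertex `v ≠ r` keep the least edge of `A` joining it to a vertex one step closer to `r` in `A`;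
these edges form a spanning tree `π(A)` with the same distances from `r` as `A`. Conversely,
the connected `A` with `π(A) = T` are exactly the sets between `T` and `R(T)`, the edges that
either join two vertices at equal depth in `T` or join depth `k` to depth `k + 1` and are not
smaller than the tree edge of the deeper end. Summing `∏_{e ∈ A} w_e` over this interval gives
`∏_{e ∈ T} w_e · ∏_{e ∈ R(T) \ T} (1 + w_e)`, whose modulus is at most `∏_{e ∈ T} |w_e|`.
-/

open Finset SimpleGraph

theorem Finset.sum_prod_Icc {ι R : Type*} [DecidableEq ι] [CommSemiring R] {T U : Finset ι}
    (hTU : T ⊆ U) (w : ι → R) :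
    ∑ A ∈ Icc T U, ∏ i ∈ A, w i = (∏ i ∈ T, w i) * ∏ i ∈ U \ T, (1 + w i) := by
  have hdisj : ∀ B ∈ (U \ T).powerset, Disjoint T B := fun B hB =>
    disjoint_of_subset_right (mem_powerset.mp hB) disjoint_sdiff
  have hinj : Set.InjOn (T ∪ ·) ((U \ T).powerset : Set (Finset ι)) := fun B₁ h₁ B₂ h₂ h => by
    simpa only [union_sdiff_cancel_left (hdisj B₁ h₁), union_sdiff_cancel_left (hdisj B₂ h₂)]
      using congrArg (· \ T) h
  rw [Icc_eq_image_powerset hTU, sum_image hinj, prod_one_add, mul_sum]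
  exact sum_congr rfl fun B hB => prod_union (hdisj B hB)

theorem norm_sum_prod_Icc_le {ι 𝕜 : Type*} [DecidableEq ι] [NormedCommRing 𝕜] [NormOneClass 𝕜]
    (T U : Finset ι) {w : ι → 𝕜} (hw : ∀ i, ‖1 + w i‖ ≤ 1) :
    ‖∑ A ∈ Icc T U, ∏ i ∈ A, w i‖ ≤ ∏ i ∈ T, ‖w i‖ := by
  by_cases hTU : T ⊆ U
  · rw [sum_prod_Icc hTU]
    calc ‖(∏ i ∈ T, w i) * ∏ i ∈ U \ T, (1 + w i)‖
        ≤ (∏ i ∈ T, ‖w i‖) * ∏ i ∈ U \ T, ‖1 + w i‖ :=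
          (norm_mul_le _ _).trans (mul_le_mul (norm_prod_le _ _) (norm_prod_le _ _)
            (norm_nonneg _) (prod_nonneg fun _ _ => norm_nonneg _))
      _ ≤ ∏ i ∈ T, ‖w i‖ :=
          mul_le_of_le_one_right (prod_nonneg fun _ _ => norm_nonneg _)
            (prod_le_one (fun _ _ => norm_nonneg _) fun i _ => hw i)
  · rw [Icc_eq_empty hTU, sum_empty, norm_zero]
    exact prod_nonneg fun _ _ => norm_nonneg _

theorem norm_sum_prod_le_of_fiber_eq_Icc {ι 𝕜 : Type*} [NormedCommRing 𝕜] [NormOneClass 𝕜]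
    {𝒜 𝒯 : Finset (Finset ι)} (π R : Finset ι → Finset ι) (hπ : ∀ A ∈ 𝒜, π A ∈ 𝒯)
    (hfiber : ∀ T ∈ 𝒯, ∀ A, A ∈ 𝒜 ∧ π A = T ↔ T ⊆ A ∧ A ⊆ R T)
    {w : ι → 𝕜} (hw : ∀ i, ‖1 + w i‖ ≤ 1) :
    ‖∑ A ∈ 𝒜, ∏ i ∈ A, w i‖ ≤ ∑ T ∈ 𝒯, ∏ i ∈ T, ‖w i‖ := by
  classical
  rw [← sum_fiberwise_of_maps_to hπ]
  refine (norm_sum_le _ _).trans (sum_le_sum fun T hT => ?_)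
  have hIcc : {A ∈ 𝒜 | π A = T} = Icc T (R T) := by
    ext A
    rw [mem_filter, mem_Icc, hfiber T hT]
  rw [hIcc]
  exact norm_sum_prod_Icc_le T (R T) hw

theorem Finset.min_eq_of_subset {α : Type*} [LinearOrder α] {s t : Finset α} (hst : s ⊆ t)
    (h : ∀ m : α, t.min = m → s.min ≤ m) : s.min = t.min := by
  refine le_antisymm ?_ (min_mono hst)
  match ht : t.min with
  | ⊤ => exact le_top
  | (m : α) => exact h m ht

namespace Penrose

open scoped Classical

variable {V E : Type*} (ends : E → Sym2 V) (r : V)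

abbrev graph (A : Finset E) : SimpleGraph V := fromEdgeSet (ends '' (A : Set E))

noncomputable def depth (A : Finset E) (v : V) : ℕ := (graph ends A).dist r v

noncomputable def downEdges (A : Finset E) (v : V) : Finset E :=
  {e ∈ A | ∃ u, ends e = s(u, v) ∧ depth ends r A u + 1 = depth ends r A v}

section Depth

variable {ends r} {A B : Finset E} {u v : V}

lemma adj_graph : (graph ends A).Adj u v ↔ (∃ e ∈ A, ends e = s(u, v)) ∧ u ≠ v := by
  simp [fromEdgeSet_adj, Set.mem_image]

lemma graph_mono (h : A ⊆ B) : graph ends A ≤ graph ends B :=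
  fromEdgeSet_mono (Set.image_mono (coe_subset.mpr h))

lemma mem_downEdges {e : E} :
    e ∈ downEdges ends r A v ↔
      e ∈ A ∧ ∃ u, ends e = s(u, v) ∧ depth ends r A u + 1 = depth ends r A v :=
  mem_filter

@[simp]
lemma depth_root (A : Finset E) : depth ends r A r = 0 := dist_self

lemma depth_eq_zero_iff (hA : (graph ends A).Connected) : depth ends r A v = 0 ↔ v = r :=
  (hA.dist_eq_zero_iff).trans eq_comm

lemma depth_le_depth_add_one (h : (graph ends A).Adj u v) :
    depth ends r A v ≤ depth ends r A u + 1 := by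
  have := h.reachable.dist_triangle_right r
  rwa [dist_eq_one_iff_adj.mpr h] at this

lemma depth_le_depth_add_one_of_mem {e : E} (he : e ∈ A)
    (hends : ends e = s(u, v)) : depth ends r A v ≤ depth ends r A u + 1 := by
  by_cases huv : u = v
  · subst huv; omega
  · exact depth_le_depth_add_one (adj_graph.mpr ⟨⟨e, he, hends⟩, huv⟩)

lemma depth_anti (h : A ⊆ B) (hA : (graph ends A).Connected) (v : V) :
    depth ends r B v ≤ depth ends r A v :=
  (hA.preconnected r v).dist_anti (graph_mono h)

lemma exists_adj_depth_eq (hA : (graph ends A).Connected) {n : ℕ}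
    (h : depth ends r A v = n + 1) : ∃ u, (graph ends A).Adj u v ∧ depth ends r A u = n := by
  have hvr : v ≠ r := fun hv => by simp [hv] at h
  obtain ⟨p, hp⟩ := (hA.preconnected r v).exists_walk_length_eq_dist
  obtain ⟨u, hadj, q, hq⟩ := p.reverse.exists_eq_cons_of_ne hvr
  have hq_len : q.length = n := by
    have := congrArg Walk.length hq
    rw [Walk.length_reverse, Walk.length_cons, hp] at this
    exact Nat.succ_injective (this.symm.trans h)
  have hu_le : depth ends r A u ≤ n := hq_len ▸ Walk.length_reverse q ▸ dist_le q.reverse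
  have := depth_le_depth_add_one (r := r) hadj.symm
  exact ⟨u, hadj.symm, by omega⟩

lemma downEdges_nonempty (hA : (graph ends A).Connected) (hv : v ≠ r) :
    (downEdges ends r A v).Nonempty := by
  obtain ⟨n, hn⟩ := Nat.exists_eq_succ_of_ne_zero ((depth_eq_zero_iff hA).not.mpr hv)
  obtain ⟨u, hadj, hu⟩ := exists_adj_depth_eq hA hn
  obtain ⟨⟨e, he, hends⟩, -⟩ := adj_graph.mp hadj
  exact ⟨e, mem_downEdges.mpr ⟨he, u, hends, by omega⟩⟩

lemma downEdges_root (A : Finset E) : downEdges ends r A r = ∅ :=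
  filter_eq_empty_iff.mpr fun _ _ ⟨_, _, hd⟩ => by simp at hd

lemma eq_of_mem_downEdges {e : E} {v₁ v₂ : V} (h₁ : e ∈ downEdges ends r A v₁)
    (h₂ : e ∈ downEdges ends r A v₂) : v₁ = v₂ := by
  obtain ⟨-, u₁, hends₁, hd₁⟩ := mem_downEdges.mp h₁
  obtain ⟨-, u₂, hends₂, hd₂⟩ := mem_downEdges.mp h₂
  rw [hends₁, Sym2.eq_iff] at hends₂
  rcases hends₂ with ⟨-, rfl⟩ | ⟨rfl, rfl⟩
  · rfl
  · omega

end Depth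

variable [LinearOrder E]

/-- The Penrose map `π`. -/
noncomputable def penroseTree (A : Finset E) : Finset E :=
  {e ∈ A | ∃ v, (downEdges ends r A v).min = e}

/-- `R(T)`: the fibre `π⁻¹(T)` of a spanning tree is the interval `[T, R(T)]`. -/
noncomputable def penroseMaximal [Fintype E] (T : Finset E) : Finset E :=
  {e | ∀ u v, ends e = s(u, v) →
    depth ends r T v ≤ depth ends r T u + 1 ∧
      (depth ends r T u + 1 = depth ends r T v → (downEdges ends r T v).min ≤ e)}

variable {ends r} {A T : Finset E}

lemma mem_penroseTree {e : E} : e ∈ penroseTree ends r A ↔ ∃ v, (downEdges ends r A v).min = e :=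
  ⟨fun h => (mem_filter.mp h).2, fun ⟨v, hv⟩ =>
    mem_filter.mpr ⟨(filter_subset _ _) (mem_of_min hv), v, hv⟩⟩

lemma penroseTree_subset (A : Finset E) : penroseTree ends r A ⊆ A := filter_subset _ _

lemma exists_walk_penroseTree (hA : (graph ends A).Connected) (v : V) :
    ∃ p : (graph ends (penroseTree ends r A)).Walk r v, p.length ≤ depth ends r A v := by
  induction hv : depth ends r A v generalizing v with
  | zero =>
    obtain rfl := (depth_eq_zero_iff hA).mp hv
    exact ⟨Walk.nil, le_rfl⟩
  | succ n ih =>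
    have hvr : v ≠ r := fun h => by simp [h] at hv
    obtain ⟨m, hm⟩ : ∃ m : E, (downEdges ends r A v).min = m :=
      ⟨_, (coe_min' (downEdges_nonempty hA hvr)).symm⟩
    obtain ⟨-, u, hends, hd⟩ := mem_downEdges.mp (mem_of_min hm)
    obtain ⟨p, hp⟩ := ih u (by omega)
    have hadj : (graph ends (penroseTree ends r A)).Adj u v :=
      adj_graph.mpr ⟨⟨m, mem_penroseTree.mpr ⟨v, hm⟩, hends⟩, by rintro rfl; omega⟩
    exact ⟨p.concat hadj, by rw [Walk.length_concat]; omega⟩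

lemma penroseTree_connected (hA : (graph ends A).Connected) :
    (graph ends (penroseTree ends r A)).Connected := by
  have hr : ∀ v, (graph ends (penroseTree ends r A)).Reachable r v := fun v =>
    let ⟨p, _⟩ := exists_walk_penroseTree hA v; ⟨p⟩
  have : Nonempty V := hA.nonempty
  exact Connected.mk fun u v => (hr u).symm.trans (hr v)

lemma depth_penroseTree (hA : (graph ends A).Connected) (v : V) :
    depth ends r (penroseTree ends r A) v = depth ends r A v := by
  refine le_antisymm ?_ (depth_anti (penroseTree_subset A) (penroseTree_connected hA) v)
  obtain ⟨p, hp⟩ := exists_walk_penroseTree hA v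
  exact (dist_le p).trans hp

lemma card_penroseTree [Fintype V] (hA : (graph ends A).Connected) :
    #(penroseTree ends r A) + 1 = Fintype.card V := by
  -- the least down-edge is a bijection from `V \ {r}` onto `penroseTree A`
  have hne : ∀ v ∈ univ.erase r, (downEdges ends r A v).Nonempty := fun v hv =>
    downEdges_nonempty hA (ne_of_mem_erase hv)
  have hcard : #(univ.erase r) = #(penroseTree ends r A) := by
    refine card_bij (fun v hv => (downEdges ends r A v).min' (hne v hv))
      (fun v hv => mem_penroseTree.mpr ⟨v, (coe_min' _).symm⟩)
      (fun v₁ hv₁ v₂ hv₂ h => eq_of_mem_downEdges (min'_mem _ (hne v₁ hv₁))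
        (h ▸ min'_mem _ (hne v₂ hv₂))) ?_
    intro e he
    obtain ⟨v, hv⟩ := mem_penroseTree.mp he
    have hvr : v ≠ r := by
      rintro rfl
      simp [downEdges_root] at hv
    refine ⟨v, mem_erase.mpr ⟨hvr, mem_univ v⟩, ?_⟩
    exact_mod_cast (coe_min' (hne v (mem_erase.mpr ⟨hvr, mem_univ v⟩))).trans hv
  rw [← hcard, card_erase_of_mem (mem_univ r), card_univ]
  have : 0 < Fintype.card V := Fintype.card_pos_iff.mpr ⟨r⟩
  omega

lemma spanningTree_penroseTree [Fintype V] (hA : SpanningConnected ends A) :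
    SpanningTree ends (penroseTree ends r A) :=
  ⟨penroseTree_connected hA, card_penroseTree hA⟩

lemma penroseTree_eq_self [Fintype V] (hT : SpanningTree ends T) : penroseTree ends r T = T :=
  eq_of_subset_of_card_le (penroseTree_subset T) (by have := card_penroseTree (r := r) hT.1; have := hT.2; omega)

lemma min_downEdges_penroseTree (hA : (graph ends A).Connected) (v : V) :
    (downEdges ends r (penroseTree ends r A) v).min = (downEdges ends r A v).min := by
  refine min_eq_of_subset (fun e he => ?_) fun m hm => min_le ?_
  · obtain ⟨heA, u, hends, hd⟩ := mem_downEdges.mp he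
    rw [depth_penroseTree hA, depth_penroseTree hA] at hd
    exact mem_downEdges.mpr ⟨penroseTree_subset A heA, u, hends, hd⟩
  · obtain ⟨-, u, hends, hd⟩ := mem_downEdges.mp (mem_of_min hm)
    refine mem_downEdges.mpr ⟨mem_penroseTree.mpr ⟨v, hm⟩, u, hends, ?_⟩
    rwa [depth_penroseTree hA, depth_penroseTree hA]

variable [Fintype E]

lemma subset_penroseMaximal (hA : (graph ends A).Connected) :
    A ⊆ penroseMaximal ends r (penroseTree ends r A) := by
  intro e he
  simp only [penroseMaximal, mem_filter, mem_univ, true_and, depth_penroseTree hA,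
    min_downEdges_penroseTree hA]
  exact fun u v hends => ⟨depth_le_depth_add_one_of_mem he hends,
    fun hd => min_le (mem_downEdges.mpr ⟨he, u, hends, hd⟩)⟩

section Interval

variable (hT : (graph ends T).Connected) (hTA : T ⊆ A) (hAR : A ⊆ penroseMaximal ends r T)
include hT hTA hAR

lemma depth_eq_of_mem_Icc (v : V) : depth ends r A v = depth ends r T v := by
  have hA := hT.mono (graph_mono hTA)
  refine le_antisymm (depth_anti hTA hT v) ?_
  induction hv : depth ends r A v generalizing v with
  | zero => simp [(depth_eq_zero_iff hA).mp hv]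
  | succ n ih =>
    obtain ⟨u, hadj, hu⟩ := exists_adj_depth_eq hA hv
    obtain ⟨⟨e, he, hends⟩, -⟩ := adj_graph.mp hadj
    have := ((mem_filter.mp (hAR he)).2 u v hends).1
    have := ih u hu
    omega

lemma min_downEdges_eq_of_mem_Icc (v : V) :
    (downEdges ends r A v).min = (downEdges ends r T v).min := by
  have hdepth := depth_eq_of_mem_Icc hT hTA hAR
  refine (min_eq_of_subset (fun e he => ?_) fun m hm => ?_).symm
  · obtain ⟨heT, u, hends, hd⟩ := mem_downEdges.mp he
    exact mem_downEdges.mpr ⟨hTA heT, u, hends, by rwa [hdepth, hdepth]⟩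
  · obtain ⟨hmA, u, hends, hd⟩ := mem_downEdges.mp (mem_of_min hm)
    rw [hdepth, hdepth] at hd
    exact ((mem_filter.mp (hAR hmA)).2 u v hends).2 hd

lemma penroseTree_eq_of_mem_Icc :
    penroseTree ends r A = penroseTree ends r T := by
  ext e
  simp only [mem_penroseTree, min_downEdges_eq_of_mem_Icc hT hTA hAR]

end Interval

lemma spanningConnected_and_penroseTree_eq_iff [Fintype V] (hT : SpanningTree ends T) :
    SpanningConnected ends A ∧ penroseTree ends r A = T ↔
      T ⊆ A ∧ A ⊆ penroseMaximal ends r T := by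
  constructor
  · rintro ⟨hA, rfl⟩
    exact ⟨penroseTree_subset A, subset_penroseMaximal hA⟩
  · rintro ⟨hTA, hAR⟩
    exact ⟨hT.1.mono (graph_mono hTA),
      (penroseTree_eq_of_mem_Icc hT.1 hTA hAR).trans (penroseTree_eq_self hT)⟩

end Penrose

open scoped Classical in
/-- Penrose inequality: if `|1 + w_e| ≤ 1` for all edges, then the generating
polynomial of connected spanning subgraphs is bounded in modulus by the
spanning-tree generating polynomial with weights `|w_e|`. -/
theorem stmt_14 {V E : Type*} [Fintype V] [Fintype E] (ends : E → Sym2 V)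
    (w : E → ℂ) (hw : ∀ e, ‖1 + w e‖ ≤ 1) :
    ‖(∑ A ∈ Finset.univ.filter (fun A : Finset E => SpanningConnected ends A),
          ∏ e ∈ A, w e)‖ ≤
      ∑ T ∈ Finset.univ.filter (fun T : Finset E => SpanningTree ends T),
        ∏ e ∈ T, ‖w e‖ := by
  cases isEmpty_or_nonempty V with
  | inl hV =>
    have hempty : univ.filter (fun A : Finset E => SpanningConnected ends A) = ∅ :=
      filter_eq_empty_iff.mpr fun A _ hA => (Connected.nonempty hA).elim isEmptyElim
    rw [hempty, sum_empty, norm_zero]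
    exact sum_nonneg fun T _ => prod_nonneg fun e _ => norm_nonneg _
  | inr hV =>
    obtain ⟨r⟩ := hV
    let _ : LinearOrder E := LinearOrder.lift' _ (Fintype.equivFin E).injective
    refine norm_sum_prod_le_of_fiber_eq_Icc (Penrose.penroseTree ends r)
      (Penrose.penroseMaximal ends r) (fun A hA => ?_) (fun T hT A => ?_) hw
    · simp only [mem_filter, mem_univ, true_and] at hA ⊢
      exact Penrose.spanningTree_penroseTree hA
    · simp only [mem_filter, mem_univ, true_and] at hT ⊢
      exact Penrose.spanningConnected_and_penroseTree_eq_iff hT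
end

section
/- For real ψ ≥ 1, the quantity K*(ψ) defined as the minimum over y ∈ (1, 1+ψ^{-1/2}) of y / ((1+ψ^{-1/2}−y)·log y) satisfies K*(ψ) ≤ 4ψ + 3ψ^{1/2}. -/
/-!
Write `ε = ψ^{-1/2}` and evaluate at `y = 1 + x` with `0 < x < ε`. The bound
`log (1 + x) ≥ 2x / (x + 2)` (i.e. `1 / log (1 + x) ≤ 1 / x + 1 / 2`) turns the value there into
the rational function `(1 + x)(x + 2) / (2x(ε - x))`, and at `x = ε/2 - ε²/8` this is at most
`(4 + 3ε) / ε² = 4ψ + 3ψ^{1/2}`: after clearing denominators the two sides differ by exactly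
`ε⁵(2 - ε)/64`.
-/

open Real Set

lemma one_add_div_mul_log_le {ε x : ℝ} (hx : 0 < x) (hxε : x < ε) :
    (1 + x) / ((1 + ε - (1 + x)) * log (1 + x)) ≤ (1 + x) * (x + 2) / (2 * x * (ε - x)) := by
  have hlog : 2 * x / (x + 2) ≤ log (1 + x) := le_log_one_add_of_nonneg hx.le
  have hεx : 0 < ε - x := by linarith
  calc (1 + x) / ((1 + ε - (1 + x)) * log (1 + x))
      = (1 + x) / (ε - x) / log (1 + x) := by rw [div_div, add_sub_add_left_eq_sub]
    _ ≤ (1 + x) / (ε - x) / (2 * x / (x + 2)) := by gcongr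
    _ = (1 + x) * (x + 2) / (2 * x * (ε - x)) := by field_simp

lemma one_add_mul_add_two_div_le {ε x : ℝ} (hε : 0 < ε) (hε2 : ε ≤ 2) (hx : x = ε / 2 - ε ^ 2 / 8) :
    (1 + x) * (x + 2) / (2 * x * (ε - x)) ≤ (4 + 3 * ε) / ε ^ 2 := by
  have hx0 : 0 < x := by rw [hx]; nlinarith
  have hxε : x < ε := by rw [hx]; nlinarith
  have slack : (4 + 3 * ε) * (2 * x * (ε - x)) - (1 + x) * (x + 2) * ε ^ 2 =
      ε ^ 5 * (2 - ε) / 64 := by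
    rw [hx]; ring
  rw [div_le_div_iff₀ (by nlinarith) (by positivity)]
  have : 0 ≤ ε ^ 5 * (2 - ε) / 64 := by
    have : 0 ≤ 2 - ε := by linarith
    positivity
  linarith

lemma sInf_div_mul_log_le {ε : ℝ} (hε : 0 < ε) (hε2 : ε ≤ 2) :
    sInf {z : ℝ | ∃ y ∈ Ioo (1 : ℝ) (1 + ε), z = y / ((1 + ε - y) * log y)} ≤
      (4 + 3 * ε) / ε ^ 2 := by
  obtain ⟨x, hx⟩ : ∃ x : ℝ, x = ε / 2 - ε ^ 2 / 8 := ⟨_, rfl⟩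
  have hx0 : 0 < x := by rw [hx]; nlinarith
  have hxε : x < ε := by rw [hx]; nlinarith
  have hbdd : BddBelow {z : ℝ | ∃ y ∈ Ioo (1 : ℝ) (1 + ε), z = y / ((1 + ε - y) * log y)} := by
    refine ⟨0, ?_⟩
    rintro _ ⟨y, ⟨hy1, hy2⟩, rfl⟩
    exact div_nonneg (by linarith) (mul_nonneg (by linarith) (log_nonneg hy1.le))
  calc _ ≤ (1 + x) / ((1 + ε - (1 + x)) * log (1 + x)) :=
        csInf_le hbdd ⟨1 + x, ⟨by linarith, by linarith⟩, rfl⟩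
    _ ≤ (1 + x) * (x + 2) / (2 * x * (ε - x)) := one_add_div_mul_log_le hx0 hxε
    _ ≤ (4 + 3 * ε) / ε ^ 2 := one_add_mul_add_two_div_le hε hε2 hx

/-- The constant `K*(ψ) = min_{1 < y < 1 + ψ^{-1/2}} y / ((1 + ψ^{-1/2} - y) log y)`
satisfies `K*(ψ) ≤ 4ψ + 3ψ^{1/2}` for `ψ ≥ 1`. -/
theorem stmt_19 (ψ : ℝ) (hψ : 1 ≤ ψ) :
    sInf {z : ℝ | ∃ y ∈ Set.Ioo (1 : ℝ) (1 + ψ ^ (-(1 : ℝ) / 2)),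
        z = y / ((1 + ψ ^ (-(1 : ℝ) / 2) - y) * Real.log y)} ≤
      4 * ψ + 3 * ψ ^ ((1 : ℝ) / 2) := by
  have hψ0 : 0 < ψ := by linarith
  set ε := ψ ^ (-(1 : ℝ) / 2)
  have hε : 0 < ε := rpow_pos_of_pos hψ0 _
  have hε1 : ε ≤ 1 := rpow_le_one_of_one_le_of_nonpos hψ (by norm_num)
  have hεψ : ε ^ 2 * ψ = 1 := by
    rw [← rpow_natCast, ← rpow_mul hψ0.le, ← rpow_add_one hψ0.ne']
    norm_num
  have hεsqrt : ε * ψ ^ ((1 : ℝ) / 2) = 1 := by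
    rw [← rpow_add hψ0]
    norm_num
  calc _ ≤ (4 + 3 * ε) / ε ^ 2 := sInf_div_mul_log_le hε (by linarith)
    _ = 4 * ψ + 3 * ψ ^ ((1 : ℝ) / 2) := by
      rw [div_eq_iff (by positivity)]
      linear_combination -4 * hεψ - 3 * ε * hεsqrt
end
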